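/- For all complex numbers w, z, every real number t, and all natural numbers m, n, the identity exp(i·(m−n)²·(t + π/2)) · w^m · z^n = (exp(i·π/4)/√2) · exp(i·(m−n)²·t) · w^m · z^n + (exp(−i·π/4)/√2) · exp(i·(m−n)²·t) · (−w)^m · (−z)^n holds, where (m−n)² is the square of the integer m − n. (This is the coefficient-wise statement, in the eigenbasis of the dimer hopping Hamiltonian H, that evolving a two-site coherent state |w,z⟩ for time π/2 under exp(iH²t) produces the Schrödinger cat state (e^{iπ/4}/√2)|w,z,t⟩ + (e^{−iπ/4}/√2)|−w,−z,t⟩.) -/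
import Mathlib

lemma expA : Complex.exp (Complex.I * (Real.pi : ℂ) / 4) = (Real.sqrt 2)/2 * (1 + Complex.I) := by
  have : Complex.I * (Real.pi : ℂ) / 4 = ((Real.pi/4 : ℝ) : ℂ) * Complex.I := by push_cast; ring
  rw [this, Complex.exp_mul_I, ← Complex.ofReal_cos, ← Complex.ofReal_sin,
    Real.cos_pi_div_four, Real.sin_pi_div_four]
  push_cast; ring

lemma expB : Complex.exp (-(Complex.I * (Real.pi : ℂ) / 4)) = (Real.sqrt 2)/2 * (1 - Complex.I) := by
  have : -(Complex.I * (Real.pi : ℂ) / 4) = ((-(Real.pi/4) : ℝ) : ℂ) * Complex.I := by push_cast; ring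
  rw [this, Complex.exp_mul_I, ← Complex.ofReal_cos, ← Complex.ofReal_sin,
    Real.cos_neg, Real.sin_neg, Real.cos_pi_div_four, Real.sin_pi_div_four]
  push_cast; ring

lemma key_even (k : ℤ) (h : Even k) :
    Complex.exp (Complex.I * ((k^2 : ℤ) : ℂ) * ((Real.pi : ℂ)/2)) = 1 := by
  obtain ⟨a, ha⟩ := h
  have : Complex.I * ((k^2 : ℤ) : ℂ) * ((Real.pi : ℂ)/2) = (a^2 : ℤ) * (2 * Real.pi * Complex.I) := by
    subst ha; push_cast; ring
  rw [this, Complex.exp_int_mul_two_pi_mul_I]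

lemma key_odd (k : ℤ) (h : Odd k) :
    Complex.exp (Complex.I * ((k^2 : ℤ) : ℂ) * ((Real.pi : ℂ)/2)) = Complex.I := by
  obtain ⟨a, ha⟩ := h
  have : Complex.I * ((k^2 : ℤ) : ℂ) * ((Real.pi : ℂ)/2)
      = ((Real.pi/2 : ℝ) : ℂ) * Complex.I + (a^2 + a : ℤ) * (2 * Real.pi * Complex.I) := by
    subst ha; push_cast; ring
  rw [this, Complex.exp_add, Complex.exp_int_mul_two_pi_mul_I, mul_one,
    Complex.exp_mul_I, ← Complex.ofReal_cos, ← Complex.ofReal_sin,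
    Real.cos_pi_div_two, Real.sin_pi_div_two]
  norm_num

/-- Coefficient-wise cat state formation: evolving a two-site coherent state `|w,z⟩`
for time `π/2` under `exp(iH²t)` produces the Schrödinger cat state
`(e^{iπ/4}/√2)|w,z,t⟩ + (e^{−iπ/4}/√2)|−w,−z,t⟩`, stated for the coefficient of the
`(m,n)`-th eigenvector of the dimer hopping Hamiltonian `H`. -/
theorem cat_state_coefficient (w z : ℂ) (t : ℝ) (m n : ℕ) :
    Complex.exp (Complex.I * ((((m : ℤ) - (n : ℤ)) ^ 2 : ℤ) : ℂ) * ((t : ℂ) + (Real.pi : ℂ) / 2))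
        * w ^ m * z ^ n
      = (Complex.exp (Complex.I * (Real.pi : ℂ) / 4) / ((Real.sqrt 2 : ℝ) : ℂ)) *
          Complex.exp (Complex.I * ((((m : ℤ) - (n : ℤ)) ^ 2 : ℤ) : ℂ) * (t : ℂ))
          * w ^ m * z ^ n
        + (Complex.exp (-(Complex.I * (Real.pi : ℂ) / 4)) / ((Real.sqrt 2 : ℝ) : ℂ)) *
            Complex.exp (Complex.I * ((((m : ℤ) - (n : ℤ)) ^ 2 : ℤ) : ℂ) * (t : ℂ))
            * (-w) ^ m * (-z) ^ n := by
  set k : ℤ := (m : ℤ) - n with hk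
  have hs : (Real.sqrt 2 : ℂ) * (Real.sqrt 2 : ℂ) = 2 := by
    norm_cast
    exact Real.mul_self_sqrt (by norm_num)
  have hsne : (Real.sqrt 2 : ℂ) ≠ 0 := by
    intro h; rw [h, mul_zero] at hs; norm_num at hs
  have hr : (Real.sqrt 2 : ℂ) * ((Real.sqrt 2 : ℝ) : ℂ)⁻¹ = 1 := mul_inv_cancel₀ hsne
  have hsplit : Complex.exp (Complex.I * ((k^2 : ℤ) : ℂ) * ((t : ℂ) + (Real.pi : ℂ) / 2))
      = Complex.exp (Complex.I * ((k^2 : ℤ) : ℂ) * (t : ℂ))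
        * Complex.exp (Complex.I * ((k^2 : ℤ) : ℂ) * ((Real.pi : ℂ)/2)) := by
    rw [← Complex.exp_add]; ring_nf
  have hpar : Even k ↔ Even ((m : ℤ) + n) := by rw [hk, Int.even_sub, Int.even_add]
  set E : ℂ := Complex.exp (Complex.I * ((k^2 : ℤ) : ℂ) * (t : ℂ)) with hE
  rw [hsplit, expA, expB]
  rcases Int.even_or_odd k with h | h
  · rw [key_even k h]
    have h1 : ((-1 : ℂ)) ^ m * (-1) ^ n = 1 := by
      rw [← pow_add]
      apply Even.neg_one_pow
      have h2 : Even (((m + n : ℕ) : ℤ)) := by push_cast; exact hpar.mp h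
      exact_mod_cast h2
    have hP : (-w) ^ m * (-z) ^ n = w ^ m * z ^ n := by
      rw [neg_pow, neg_pow]
      linear_combination (w ^ m * z ^ n) * h1
    linear_combination
      (-((1 + Complex.I)/2 * E * (w ^ m * z ^ n)) - (1 - Complex.I)/2 * E * ((-w) ^ m * (-z) ^ n)) * hr
      + (-((1 - Complex.I)/2) * E) * hP
  · rw [key_odd k h]
    have h1 : ((-1 : ℂ)) ^ m * (-1) ^ n = -1 := by
      rw [← pow_add]
      apply Odd.neg_one_pow
      have h2 : Odd (((m + n : ℕ) : ℤ)) := by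
        push_cast
        have hne : ¬ Even k := (Int.not_even_iff_odd).mpr h
        exact (Int.not_even_iff_odd).mp (fun he => hne (hpar.mpr he))
      exact_mod_cast h2
    have hP : (-w) ^ m * (-z) ^ n = -(w ^ m * z ^ n) := by
      rw [neg_pow, neg_pow]
      linear_combination (w ^ m * z ^ n) * h1
    linear_combination
      (-((1 + Complex.I)/2 * E * (w ^ m * z ^ n)) - (1 - Complex.I)/2 * E * ((-w) ^ m * (-z) ^ n)) * hr
      + (-((1 - Complex.I)/2) * E) * hP
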